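/- Let 0 ≤ c < √2 and let ψ₀ ∈ X(ℝ). For every ε > 0 there exists δ > 0 such that every ψ ∈ X(ℝ) with d_c(ψ, ψ₀) < δ satisfies ‖|ψ|² − |ψ₀|²‖_{L^∞(ℝ)} < ε. -/

import Mathlib

open MeasureTheory Real Filter
open scoped Real Topology Classical

noncomputable section

/-- `⟨z₁, z₂⟩_ℂ = Re (z₁ * conj z₂)`. -/
def inC (z w : ℂ) : ℝ := (z * (starRingEnd ℂ) w).re

/-! ### One-dimensional objects -/

/-- Membership in the energy set `X(ℝ)`: `ψ` is (locally `H¹`, hence) continuous,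
absolutely continuous with derivative `deriv ψ`, with `ψ' ∈ L²(ℝ)` and `1 - |ψ|² ∈ L²(ℝ)`. -/
def MemX1 (ψ : ℝ → ℂ) : Prop :=
  Continuous ψ ∧ (∀ a b : ℝ, ψ b - ψ a = ∫ t in a..b, deriv ψ t) ∧
  MemLp (deriv ψ) 2 volume ∧ MemLp (fun x => 1 - ‖ψ x‖ ^ 2) 2 volume

/-- Membership in `H¹(ℝ; ℂ)`. -/
def MemH1 (h : ℝ → ℂ) : Prop :=
  Continuous h ∧ (∀ a b : ℝ, h b - h a = ∫ t in a..b, deriv h t) ∧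
  MemLp h 2 volume ∧ MemLp (deriv h) 2 volume

/-- The `H¹(ℝ)` norm. -/
def H1norm (h : ℝ → ℂ) : ℝ :=
  Real.sqrt ((∫ x : ℝ, ‖h x‖ ^ 2) + ∫ x : ℝ, ‖deriv h x‖ ^ 2)

/-- The one-dimensional Ginzburg-Landau energy. -/
def E1 (ψ : ℝ → ℂ) : ℝ :=
  (1 / 2) * (∫ x : ℝ, ‖deriv ψ x‖ ^ 2) + (1 / 4) * ∫ x : ℝ, (1 - ‖ψ x‖ ^ 2) ^ 2

/-- The (a.e.) derivative of a phase function of `ψ`, expressed in terms of `ψ`: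
if `ψ = ρ e^{iθ}` then `θ' = -⟨i ψ', ψ⟩_ℂ / ρ²`. -/
def phaseDeriv (ψ : ℝ → ℂ) (x : ℝ) : ℝ :=
  -(inC (Complex.I * deriv ψ x) (ψ x)) / ‖ψ x‖ ^ 2

/-- `UMomEq ψ p` expresses that the untwisted momentum `[P](ψ) ∈ ℝ/πℤ` equals the class of `p`:
for some `s > 0` with `|ψ| ≥ 1/2` outside `[-s, s]` and some phase values `θ⁺, θ⁻` of `ψ` at
`±s`, the expression `P_θ(ψ) = (1/2)∫_{-s}^{s} ⟨iψ',ψ⟩ + (1/2)(θ⁺ - θ⁻) + (1/2)∫_{|x|≥s} ηθ'`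
equals `p` modulo `π`. -/
def UMomEq (ψ : ℝ → ℂ) (p : ℝ) : Prop :=
  ∃ s : ℝ, 0 < s ∧ (∀ x : ℝ, s ≤ |x| → (1 : ℝ) / 2 ≤ ‖ψ x‖) ∧
    ∃ θp θm : ℝ,
      ψ s = (‖ψ s‖ : ℂ) * Complex.exp ((θp : ℂ) * Complex.I) ∧
      ψ (-s) = (‖ψ (-s)‖ : ℂ) * Complex.exp ((θm : ℂ) * Complex.I) ∧
      ∃ k : ℤ,
        (1 / 2) * (∫ x in (-s)..s, inC (Complex.I * deriv ψ x) (ψ x)) +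
            (1 / 2) * (θp - θm) +
            (1 / 2) * (∫ x in {x : ℝ | s ≤ |x|}, (1 - ‖ψ x‖ ^ 2) * phaseDeriv ψ x) =
          p + k * π

/-- The minimal one-dimensional Ginzburg-Landau energy `𝔍(p)` at fixed untwisted momentum `p`. -/
def Jmin (p : ℝ) : ℝ := sInf {e : ℝ | ∃ ψ : ℝ → ℂ, MemX1 ψ ∧ UMomEq ψ p ∧ E1 ψ = e}

/-- The dark soliton profile `𝔲_c`. -/
def soliton (c : ℝ) (x : ℝ) : ℂ :=
  (Real.sqrt ((2 - c ^ 2) / 2) * Real.tanh (Real.sqrt (2 - c ^ 2) / 2 * x) : ℝ) +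
    (c / Real.sqrt 2 : ℝ) * Complex.I

/-- `η_c = 1 - |𝔲_c|²`. -/
def etaC (c : ℝ) (x : ℝ) : ℝ := 1 - ‖soliton c x‖ ^ 2

/-- The weighted distance `d_c` on `X(ℝ)`. -/
def dc1 (c : ℝ) (ψ₁ ψ₂ : ℝ → ℂ) : ℝ :=
  Real.sqrt ((∫ x : ℝ, ‖deriv ψ₁ x - deriv ψ₂ x‖ ^ 2) +
    (∫ x : ℝ, etaC c x * ‖ψ₁ x - ψ₂ x‖ ^ 2) +
    ∫ x : ℝ, ((1 - ‖ψ₁ x‖ ^ 2) - (1 - ‖ψ₂ x‖ ^ 2)) ^ 2)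

/-- The non-vanishing energy set `NVX(ℝ)`. -/
def NVX (ψ : ℝ → ℂ) : Prop := MemX1 ψ ∧ ∃ m : ℝ, 0 < m ∧ ∀ x : ℝ, m ≤ ‖ψ x‖

/-- The momentum `P(ψ) = (1/2) ∫ (1 - ρ²) θ'` of a non-vanishing function. -/
def mom1 (ψ : ℝ → ℂ) : ℝ := (1 / 2) * ∫ x : ℝ, (1 - ‖ψ x‖ ^ 2) * phaseDeriv ψ x

/-- `IsCp p c` : `c = c_p`, i.e. `|c| < √2`, `c` has the sign of `p`, and
`Ξ(|c|) = π/2 - arctan(|c|/√(2-c²)) - (|c|/2)√(2-c²) = |p|`. -/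
def IsCp (p c : ℝ) : Prop :=
  |c| < Real.sqrt 2 ∧ (0 < p → 0 ≤ c) ∧ (p < 0 → c ≤ 0) ∧
    π / 2 - Real.arctan (|c| / Real.sqrt (2 - c ^ 2)) - |c| / 2 * Real.sqrt (2 - c ^ 2) = |p|

/-! ### Objects on `ℝ × 𝕋` -/

/-- The measure of the period cell `ℝ × (0,1]` inside `ℝ²`, modelling `ℝ × 𝕋`. -/
def μT : Measure (ℝ × ℝ) := volume.restrict (Set.univ ×ˢ Set.Ioc (0 : ℝ) 1)

/-- `g` is the weak partial derivative of `ψ : ℝ² → ℂ` in the direction `v`. -/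
def IsWPartial (ψ : ℝ × ℝ → ℂ) (v : ℝ × ℝ) (g : ℝ × ℝ → ℂ) : Prop :=
  LocallyIntegrable g volume ∧
    ∀ φ : ℝ × ℝ → ℝ, ContDiff ℝ (⊤ : ℕ∞) φ → HasCompactSupport φ →
      ∫ z : ℝ × ℝ, (fderiv ℝ φ z v) • ψ z = -∫ z : ℝ × ℝ, φ z • g z

/-- A choice of weak partial derivative of `ψ` in the direction `v` (zero if none exists). -/
def wpart (ψ : ℝ × ℝ → ℂ) (v : ℝ × ℝ) : ℝ × ℝ → ℂ :=
  if h : ∃ g, IsWPartial ψ v g then Classical.choose h else 0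

/-- Weak partial derivative `∂_x`. -/
def wdx (ψ : ℝ × ℝ → ℂ) : ℝ × ℝ → ℂ := wpart ψ (1, 0)

/-- Weak partial derivative `∂_y`. -/
def wdy (ψ : ℝ × ℝ → ℂ) : ℝ × ℝ → ℂ := wpart ψ (0, 1)

/-- Membership in the energy set `X(ℝ × 𝕋)`: `ψ` is `1`-periodic in `y`, locally integrable,
has weak partial derivatives, `∇ψ ∈ L²(ℝ × 𝕋)` and `1 - |ψ|² ∈ L²(ℝ × 𝕋)`. -/
def MemX2 (ψ : ℝ × ℝ → ℂ) : Prop :=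
  (∀ x y : ℝ, ψ (x, y + 1) = ψ (x, y)) ∧ LocallyIntegrable ψ volume ∧
  (∃ g, IsWPartial ψ (1, 0) g) ∧ (∃ g, IsWPartial ψ (0, 1) g) ∧
  MemLp (wdx ψ) 2 μT ∧ MemLp (wdy ψ) 2 μT ∧ MemLp (fun z => 1 - ‖ψ z‖ ^ 2) 2 μT

/-- Membership in `H¹(ℝ × 𝕋; ℂ)`. -/
def MemH1T (w : ℝ × ℝ → ℂ) : Prop :=
  (∀ x y : ℝ, w (x, y + 1) = w (x, y)) ∧ LocallyIntegrable w volume ∧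
  (∃ g, IsWPartial w (1, 0) g) ∧ (∃ g, IsWPartial w (0, 1) g) ∧
  MemLp w 2 μT ∧ MemLp (wdx w) 2 μT ∧ MemLp (wdy w) 2 μT

/-- The `H¹(ℝ × 𝕋)` norm. -/
def H1normT (w : ℝ × ℝ → ℂ) : ℝ :=
  Real.sqrt (∫ z, (‖w z‖ ^ 2 + ‖wdx w z‖ ^ 2 + ‖wdy w z‖ ^ 2) ∂μT)

/-- The rescaled Ginzburg-Landau energy `E_λ` on `ℝ × 𝕋`. -/
def E2 (lam : ℝ) (ψ : ℝ × ℝ → ℂ) : ℝ :=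
  (1 / 2) * (∫ z, (‖wdx ψ z‖ ^ 2 + lam ^ 2 * ‖wdy ψ z‖ ^ 2) ∂μT) +
    (1 / 4) * ∫ z, (1 - ‖ψ z‖ ^ 2) ^ 2 ∂μT

/-- The zeroth Fourier coefficient `ψ̂₀(x) = ∫₀¹ ψ(x, y) dy`. -/
def hat0 (ψ : ℝ × ℝ → ℂ) (x : ℝ) : ℂ := ∫ y in (0 : ℝ)..1, ψ (x, y)

/-- `w₀ = ψ - ψ̂₀`. -/
def w0 (ψ : ℝ × ℝ → ℂ) : ℝ × ℝ → ℂ := fun z => ψ z - hat0 ψ z.1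

/-- `UMomEq2 ψ p` : the untwisted momentum on `X(ℝ × 𝕋)`,
`[P](ψ) = [P](ψ̂₀) + (1/2) ∫ ⟨i ∂ₓ w₀, w₀⟩_ℂ`, equals `p` modulo `π`. -/
def UMomEq2 (ψ : ℝ × ℝ → ℂ) (p : ℝ) : Prop :=
  ∃ q : ℝ, UMomEq (hat0 ψ) q ∧
    ∃ k : ℤ,
      q + (1 / 2) * (∫ z, inC (Complex.I * wdx (w0 ψ) z) (w0 ψ z) ∂μT) = p + k * π

/-- The minimal energy `𝓘_λ(p)` on `ℝ × 𝕋` at fixed untwisted momentum `p`. -/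
def I2 (lam p : ℝ) : ℝ :=
  sInf {e : ℝ | ∃ ψ : ℝ × ℝ → ℂ, MemX2 ψ ∧ UMomEq2 ψ p ∧ E2 lam ψ = e}

/-- The subset `Y(ℝ × 𝕋)` of `X(ℝ × 𝕋)` of functions whose zeroth Fourier mode
does not vanish. -/
def MemY2 (ψ : ℝ × ℝ → ℂ) : Prop := MemX2 ψ ∧ NVX (hat0 ψ)

/-- The momentum on `Y(ℝ × 𝕋)` : `P(ψ) = P(ψ̂₀) + (1/2) ∫ ⟨i ∂ₓ w₀, w₀⟩_ℂ`. -/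
def mom2 (ψ : ℝ × ℝ → ℂ) : ℝ :=
  mom1 (hat0 ψ) + (1 / 2) * ∫ z, inC (Complex.I * wdx (w0 ψ) z) (w0 ψ z) ∂μT

/-- The weighted distance `d_c` on `X(ℝ × 𝕋)`. -/
def dc2 (c : ℝ) (ψ₁ ψ₂ : ℝ × ℝ → ℂ) : ℝ :=
  Real.sqrt ((∫ z, (‖wdx ψ₁ z - wdx ψ₂ z‖ ^ 2 + ‖wdy ψ₁ z - wdy ψ₂ z‖ ^ 2) ∂μT) +
    (∫ z, etaC c z.1 * ‖ψ₁ z - ψ₂ z‖ ^ 2 ∂μT) +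
    ∫ z, ((1 - ‖ψ₁ z‖ ^ 2) - (1 - ‖ψ₂ z‖ ^ 2)) ^ 2 ∂μT)

/-- The neighbourhood `𝒱_p(α)` of the soliton `𝔲_c` (`c = c_p`) in `X(ℝ × 𝕋)`. -/
def Vset (c α : ℝ) : Set (ℝ × ℝ → ℂ) :=
  {ψ | MemX2 ψ ∧
    (∃ a θ : ℝ,
      dc1 c (fun x => Complex.exp ((θ : ℂ) * Complex.I) * hat0 ψ (x - a)) (soliton c) < α) ∧
    H1normT (w0 ψ) < α}



section Helpers
open MeasureTheory Real
open scoped ENNReal NNReal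
variable {E : Type*} [NormedAddCommGroup E]


theorem elp_eq (f : ℝ → E) (hf : MemLp f 2 volume) :
    (eLpNorm f 2 volume).toReal = Real.sqrt (∫ x, ‖f x‖ ^ 2) := by
  rw [hf.eLpNorm_eq_integral_rpow_norm two_ne_zero ENNReal.ofNat_ne_top]
  rw [ENNReal.toReal_ofReal (by positivity)]
  rw [Real.sqrt_eq_rpow]
  norm_num

theorem minkowski (f g : ℝ → E) (hf : MemLp f 2 volume) (hg : MemLp g 2 volume) :
    Real.sqrt (∫ x, ‖f x‖ ^ 2) ≤
      Real.sqrt (∫ x, ‖f x - g x‖ ^ 2) + Real.sqrt (∫ x, ‖g x‖ ^ 2) := by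
  have hsub : MemLp (fun x => f x - g x) 2 volume := hf.sub hg
  have h1 := eLpNorm_add_le hsub.aestronglyMeasurable hg.aestronglyMeasurable (by norm_num : (1:ℝ≥0∞) ≤ 2)
  have heq : (fun x => f x - g x) + g = f := by ext x; simp
  rw [heq] at h1
  have h2 := ENNReal.toReal_mono (by
      exact ENNReal.add_ne_top.2 ⟨hsub.eLpNorm_ne_top, hg.eLpNorm_ne_top⟩) h1
  rw [ENNReal.toReal_add hsub.eLpNorm_ne_top hg.eLpNorm_ne_top] at h2
  rwa [elp_eq f hf, elp_eq _ hsub, elp_eq g hg] at h2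

theorem intOn (f : ℝ → E) (hf : MemLp f 2 volume) (a b : ℝ) :
    IntegrableOn f (Set.Ioc a b) volume := by
  have hsq : IntegrableOn (fun x => ‖f x‖ ^ 2) (Set.Ioc a b) volume :=
    (hf.norm.integrable_sq).integrableOn
  have hc : IntegrableOn (fun _ : ℝ => (1:ℝ)) (Set.Ioc a b) volume := by
    exact integrableOn_const (by simp [Real.volume_Ioc])
  refine Integrable.mono' ((hc.add hsq).div_const 2) hf.aestronglyMeasurable.restrict ?_
  filter_upwards with x
  have h := sq_nonneg (‖f x‖ - 1)
  simp only [Pi.add_apply]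
  nlinarith [norm_nonneg (f x)]

theorem cs (f : ℝ → E) (hf : MemLp f 2 volume) {a b : ℝ} (hab : a ≤ b) :
    ∫ t in Set.Ioc a b, ‖f t‖ ≤ Real.sqrt (b - a) * Real.sqrt (∫ x, ‖f x‖ ^ 2) := by
  set I : ℝ := ∫ x, ‖f x‖ ^ 2 with hI
  have hI0 : 0 ≤ I := integral_nonneg fun x => by positivity
  set L : ℝ := b - a with hL
  have hL0 : 0 ≤ L := by linarith
  have hsqint : Integrable (fun x => ‖f x‖ ^ 2) volume := hf.norm.integrable_sq
  have hIset : ∫ t in Set.Ioc a b, ‖f t‖ ^ 2 ≤ I :=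
    setIntegral_le_integral hsqint (Filter.Eventually.of_forall fun x => by positivity)
  have key : ∀ r : ℝ, 0 < r → (∫ t in Set.Ioc a b, ‖f t‖) ≤ r * L / 2 + I / (2 * r) := by
    intro r hr
    have hmono : (∫ t in Set.Ioc a b, ‖f t‖) ≤
        ∫ t in Set.Ioc a b, (r / 2 + ‖f t‖ ^ 2 / (2 * r)) := by
      apply integral_mono_of_nonneg (Filter.Eventually.of_forall fun x => norm_nonneg _)
      · exact ((integrableOn_const (by simp [Real.volume_Ioc])).add
          ((hsqint.integrableOn).div_const (2 * r)))
      · filter_upwards with t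
        have h := sq_nonneg (‖f t‖ - r)
        have : 2 * r * ‖f t‖ ≤ r ^ 2 + ‖f t‖ ^ 2 := by nlinarith
        rw [div_add_div _ _ (by norm_num : (2:ℝ) ≠ 0) (by positivity : (2*r) ≠ 0),
          le_div_iff₀ (by positivity)]
        nlinarith
    have heq : ∫ t in Set.Ioc a b, (r / 2 + ‖f t‖ ^ 2 / (2 * r)) =
        r * L / 2 + (∫ t in Set.Ioc a b, ‖f t‖ ^ 2) / (2 * r) := by
      rw [integral_add (integrableOn_const (C := r / 2) (μ := volume) (s := Set.Ioc a b) (by simp [Real.volume_Ioc]))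
        ((hsqint.integrableOn).div_const (2 * r))]
      rw [setIntegral_const, integral_div, measureReal_def, Real.volume_Ioc, smul_eq_mul]
      rw [ENNReal.toReal_ofReal hL0]; ring
    calc (∫ t in Set.Ioc a b, ‖f t‖) ≤ _ := hmono
      _ = r * L / 2 + (∫ t in Set.Ioc a b, ‖f t‖ ^ 2) / (2 * r) := heq
      _ ≤ r * L / 2 + I / (2 * r) := by
          have h2 : (∫ t in Set.Ioc a b, ‖f t‖ ^ 2) / (2 * r) ≤ I / (2 * r) :=
            div_le_div_of_nonneg_right hIset (by positivity) |>.trans_eq rfl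
          linarith
  rcases eq_or_lt_of_le hL0 with h0 | hLpos
  · have : Set.Ioc a b = ∅ := by
      apply Set.Ioc_eq_empty; simp only [not_lt]; linarith [h0.symm ▸ hL]
    simp [this]
    positivity
  rcases eq_or_lt_of_le hI0 with hI00 | hIpos
  · have : (∫ t in Set.Ioc a b, ‖f t‖) ≤ 0 := by
      apply le_of_forall_pos_le_add
      intro ε hε
      have := key (2 * ε / L) (by positivity)
      have h2 : 2 * ε / L * L / 2 = ε := by field_simp
      rw [h2] at this
      calc (∫ t in Set.Ioc a b, ‖f t‖) ≤ ε + I / (2 * (2 * ε / L)) := this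
        _ = 0 + ε := by rw [← hI00]; ring
    calc (∫ t in Set.Ioc a b, ‖f t‖) ≤ 0 := this
      _ ≤ _ := by positivity
  · have := key (Real.sqrt I / Real.sqrt L) (by positivity)
    calc (∫ t in Set.Ioc a b, ‖f t‖) ≤ _ := this
      _ = Real.sqrt L * Real.sqrt I := by
          rw [div_mul_eq_mul_div, div_div]
          rw [eq_comm]
          have hsL : Real.sqrt L > 0 := Real.sqrt_pos.2 hLpos
          have hsI : Real.sqrt I > 0 := Real.sqrt_pos.2 hIpos
          have hLL : Real.sqrt L * Real.sqrt L = L := Real.mul_self_sqrt hLpos.le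
          have hII : Real.sqrt I * Real.sqrt I = I := Real.mul_self_sqrt hIpos.le
          field_simp
          nlinarith [hLL, hII]
      _ = Real.sqrt (b - a) * Real.sqrt I := by rw [hL]

theorem incr [NormedSpace ℝ E] (f : ℝ → E) (hf : MemLp f 2 volume) {a b : ℝ} (hab : a ≤ b) :
    ‖∫ t in a..b, f t‖ ≤ Real.sqrt (b - a) * Real.sqrt (∫ x, ‖f x‖ ^ 2) := by
  calc ‖∫ t in a..b, f t‖ ≤ ∫ t in a..b, ‖f t‖ :=
        intervalIntegral.norm_integral_le_integral_norm hab
    _ = ∫ t in Set.Ioc a b, ‖f t‖ := intervalIntegral.integral_of_le hab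
    _ ≤ _ := cs f hf hab

-- min point selection
theorem pick_min (F : ℝ → ℝ) (hF : Continuous F) (hInt : Integrable (fun y => F y ^ 2) volume)
    (x L : ℝ) (hL : 0 < L) :
    ∃ a ∈ Set.Icc x (x + L), L * F a ^ 2 ≤ ∫ y, F y ^ 2 := by
  obtain ⟨a, ha, hmin⟩ := (isCompact_Icc (a := x) (b := x + L)).exists_isMinOn
    ⟨x, by constructor <;> linarith⟩ ((hF.pow 2).continuousOn)
  refine ⟨a, ha, ?_⟩
  have h1 : L * F a ^ 2 = ∫ y in Set.Icc x (x + L), F a ^ 2 := by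
    rw [setIntegral_const, measureReal_def, Real.volume_Icc, smul_eq_mul, ENNReal.toReal_ofReal (by linarith)]
    ring_nf
  rw [h1]
  calc (∫ y in Set.Icc x (x + L), F a ^ 2) ≤ ∫ y in Set.Icc x (x + L), F y ^ 2 := by
        apply setIntegral_mono_on (integrableOn_const (by simp [Real.volume_Icc]))
          hInt.integrableOn measurableSet_Icc
        intro y hy; exact hmin hy
    _ ≤ ∫ y, F y ^ 2 := setIntegral_le_integral hInt
        (Filter.Eventually.of_forall fun y => by positivity)

theorem sup_bound (ψ : ℝ → ℂ) (hcont : Continuous ψ)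
    (hftc : ∀ a b : ℝ, ψ b - ψ a = ∫ t in a..b, deriv ψ t)
    (hd : MemLp (deriv ψ) 2 volume)
    (hh : MemLp (fun x => 1 - ‖ψ x‖ ^ 2) 2 volume) (x : ℝ) :
    ‖ψ x‖ ≤ Real.sqrt (1 + Real.sqrt (∫ y, (1 - ‖ψ y‖ ^ 2) ^ 2)) +
      Real.sqrt (∫ y, ‖deriv ψ y‖ ^ 2) := by
  set H := Real.sqrt (∫ y, (1 - ‖ψ y‖ ^ 2) ^ 2) with hH
  set K := Real.sqrt (∫ y, ‖deriv ψ y‖ ^ 2) with hK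
  have hH0 : 0 ≤ H := Real.sqrt_nonneg _
  have hK0 : 0 ≤ K := Real.sqrt_nonneg _
  have hIsq : Integrable (fun y => (1 - ‖ψ y‖ ^ 2) ^ 2) volume := hh.integrable_sq
  obtain ⟨a, ha, hamin⟩ := pick_min (fun y => 1 - ‖ψ y‖ ^ 2)
    (by continuity) hIsq x 1 one_pos
  have hHsq : (1 - ‖ψ a‖ ^ 2) ^ 2 ≤ H ^ 2 := by
    rw [hH, Real.sq_sqrt (integral_nonneg fun y => by positivity)]
    simpa using hamin
  have habs : |1 - ‖ψ a‖ ^ 2| ≤ H := by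
    calc |1 - ‖ψ a‖ ^ 2| = Real.sqrt ((1 - ‖ψ a‖ ^ 2) ^ 2) := (Real.sqrt_sq_eq_abs _).symm
      _ ≤ Real.sqrt (H ^ 2) := Real.sqrt_le_sqrt hHsq
      _ = H := Real.sqrt_sq hH0
  have hψa : ‖ψ a‖ ≤ Real.sqrt (1 + H) := by
    rw [Real.le_sqrt (norm_nonneg _) (by linarith)]
    obtain ⟨h1, h2⟩ := abs_le.1 habs
    linarith
  have hinc : ‖ψ x - ψ a‖ ≤ K := by
    have h1 : ψ a - ψ x = ∫ t in x..a, deriv ψ t := hftc x a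
    have h2 : ‖ψ x - ψ a‖ = ‖∫ t in x..a, deriv ψ t‖ := by
      rw [← h1, norm_sub_rev]
    rw [h2]
    calc ‖∫ t in x..a, deriv ψ t‖ ≤ Real.sqrt (a - x) * K := incr _ hd ha.1
      _ ≤ 1 * K := by
          apply mul_le_mul_of_nonneg_right _ hK0
          rw [show (1:ℝ) = Real.sqrt 1 by simp]
          exact Real.sqrt_le_sqrt (by linarith [ha.2])
      _ = K := one_mul K
  calc ‖ψ x‖ = ‖ψ a + (ψ x - ψ a)‖ := by ring_nf
    _ ≤ ‖ψ a‖ + ‖ψ x - ψ a‖ := norm_add_le _ _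
    _ ≤ Real.sqrt (1 + H) + K := add_le_add hψa hinc

theorem minkowskiR (f g : ℝ → ℝ) (hf : MemLp f 2 volume) (hg : MemLp g 2 volume) :
    Real.sqrt (∫ x, (f x) ^ 2) ≤
      Real.sqrt (∫ x, (f x - g x) ^ 2) + Real.sqrt (∫ x, (g x) ^ 2) := by
  have := minkowski f g hf hg
  simpa [Real.norm_eq_abs, sq_abs] using this

theorem tanh_sq_le_one (t : ℝ) : Real.tanh t ^ 2 ≤ 1 := by
  rw [Real.tanh_eq_sinh_div_cosh, div_pow]
  rw [div_le_one (by positivity)]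
  nlinarith [Real.cosh_sq t, Real.cosh_pos t]

end Helpers


theorem etaC_nonneg {c : ℝ} (h2 : c ^ 2 ≤ 2) (x : ℝ) : 0 ≤ etaC c x := by
  unfold etaC soliton
  set a : ℝ := Real.sqrt ((2 - c ^ 2) / 2) * Real.tanh (Real.sqrt (2 - c ^ 2) / 2 * x) with ha
  set b : ℝ := c / Real.sqrt 2 with hb
  have hnorm : ‖(↑a + ↑b * Complex.I : ℂ)‖ ^ 2 = a ^ 2 + b ^ 2 := by
    rw [Complex.sq_norm, Complex.normSq_apply]
    simp
    ring
  rw [hnorm]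
  have h1 : a ^ 2 ≤ (2 - c ^ 2) / 2 := by
    rw [ha, mul_pow, Real.sq_sqrt (by linarith : (0:ℝ) ≤ (2 - c ^ 2) / 2)]
    nlinarith [tanh_sq_le_one (Real.sqrt (2 - c ^ 2) / 2 * x), sub_nonneg.2 h2]
  have h2' : b ^ 2 = c ^ 2 / 2 := by
    rw [hb, div_pow, Real.sq_sqrt (by norm_num : (0:ℝ) ≤ 2)]
  linarith

theorem aux_frac {C e : ℝ} (hC : 0 < C) (he : 0 < e) : (C * e) / (2 * C + 2) < e / 2 := by
  rw [div_lt_div_iff₀ (by positivity) (by norm_num : (0:ℝ) < 2)]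
  nlinarith

set_option maxHeartbeats 2000000 in
/-- Uniform control of the modulus: the map `ψ ↦ |ψ|²` is continuous from `(X(ℝ), d_c)`
to `L^∞(ℝ)`. -/
theorem cont_modulus (c : ℝ) (hc0 : 0 ≤ c) (hc : c < Real.sqrt 2)
    (ψ₀ : ℝ → ℂ) (hψ₀ : MemX1 ψ₀) :
    ∀ ε : ℝ, 0 < ε → ∃ δ : ℝ, 0 < δ ∧
      ∀ ψ : ℝ → ℂ, MemX1 ψ → dc1 c ψ ψ₀ < δ →
        ∀ x : ℝ, |‖ψ x‖ ^ 2 - ‖ψ₀ x‖ ^ 2| < ε := by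
  intro ε hε
  obtain ⟨hcont₀, hftc₀, hd₀, hh₀⟩ := hψ₀
  set K₀ : ℝ := Real.sqrt (∫ x, ‖deriv ψ₀ x‖ ^ 2) with hK₀
  set H₀ : ℝ := Real.sqrt (∫ x, (1 - ‖ψ₀ x‖ ^ 2) ^ 2) with hH₀
  have hK₀0 : 0 ≤ K₀ := Real.sqrt_nonneg _
  have hH₀0 : 0 ≤ H₀ := Real.sqrt_nonneg _
  set B : ℝ := Real.sqrt (2 + H₀) + (K₀ + 1) with hB
  have hB1 : 1 ≤ B := by
    have := Real.sqrt_nonneg (2 + H₀); rw [hB]; linarith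
  have hB0 : 0 < B := by linarith
  set C : ℝ := 2 * B * (2 * K₀ + 1) with hC
  have hC0 : 0 < C := by rw [hC]; exact mul_pos (by linarith) (by linarith)
  set L : ℝ := min 1 ((ε / (2 * C + 2)) ^ 2) with hLdef
  have hL0 : 0 < L := lt_min one_pos (pow_pos (div_pos hε (by linarith)) 2)
  have hL1 : L ≤ 1 := min_le_left _ _
  have hsqL0 : 0 < Real.sqrt L := Real.sqrt_pos.2 hL0
  have hsqL : Real.sqrt L ≤ ε / (2 * C + 2) := by
    calc Real.sqrt L ≤ Real.sqrt ((ε / (2 * C + 2)) ^ 2) :=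
          Real.sqrt_le_sqrt (min_le_right _ _)
      _ = ε / (2 * C + 2) := Real.sqrt_sq (div_pos hε (by linarith)).le
  set δ : ℝ := min 1 (Real.sqrt L * ε / 2) with hδdef
  have hδ0 : 0 < δ := lt_min one_pos (div_pos (mul_pos hsqL0 hε) (by norm_num))
  have hδ1 : δ ≤ 1 := min_le_left _ _
  have hδ2 : δ ≤ Real.sqrt L * ε / 2 := min_le_right _ _
  refine ⟨δ, hδ0, ?_⟩
  intro ψ hψ hdist x
  obtain ⟨hcont, hftc, hdψ, hhψ⟩ := hψ
  -- the three pieces of the distance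
  set I₁ : ℝ := ∫ y, ‖deriv ψ y - deriv ψ₀ y‖ ^ 2 with hI₁
  set I₂ : ℝ := ∫ y, etaC c y * ‖ψ y - ψ₀ y‖ ^ 2 with hI₂
  set I₃ : ℝ := ∫ y, ((1 - ‖ψ y‖ ^ 2) - (1 - ‖ψ₀ y‖ ^ 2)) ^ 2 with hI₃
  have hI₁0 : 0 ≤ I₁ := integral_nonneg fun y => by positivity
  have hc2 : c ^ 2 ≤ 2 := by
    nlinarith [Real.sq_sqrt (by norm_num : (0:ℝ) ≤ 2), Real.sqrt_nonneg 2]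
  have hI₂0 : 0 ≤ I₂ := integral_nonneg fun y => mul_nonneg (etaC_nonneg hc2 y) (by positivity)
  have hI₃0 : 0 ≤ I₃ := integral_nonneg fun y => by positivity
  have hS : I₁ + I₂ + I₃ < δ ^ 2 := by
    have h1 : Real.sqrt (I₁ + I₂ + I₃) < δ := hdist
    have h2 : I₁ + I₂ + I₃ = Real.sqrt (I₁ + I₂ + I₃) ^ 2 :=
      (Real.sq_sqrt (by linarith)).symm
    rw [h2]
    exact pow_lt_pow_left₀ h1 (Real.sqrt_nonneg _) (by norm_num)
  have hI₁δ : I₁ < δ ^ 2 := by linarith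
  have hI₃δ : I₃ < δ ^ 2 := by linarith
  have hsI₁ : Real.sqrt I₁ ≤ δ := by
    calc Real.sqrt I₁ ≤ Real.sqrt (δ ^ 2) := Real.sqrt_le_sqrt hI₁δ.le
      _ = δ := Real.sqrt_sq hδ0.le
  have hsI₃ : Real.sqrt I₃ ≤ δ := by
    calc Real.sqrt I₃ ≤ Real.sqrt (δ ^ 2) := Real.sqrt_le_sqrt hI₃δ.le
      _ = δ := Real.sqrt_sq hδ0.le
  have hdiff : MemLp (fun y => deriv ψ y - deriv ψ₀ y) 2 volume := hdψ.sub hd₀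
  have hgmem : MemLp (fun y => (1 - ‖ψ y‖ ^ 2) - (1 - ‖ψ₀ y‖ ^ 2)) 2 volume := hhψ.sub hh₀
  -- L² bounds for ψ
  have hKψ : Real.sqrt (∫ y, ‖deriv ψ y‖ ^ 2) ≤ K₀ + 1 := by
    have := minkowski (deriv ψ) (deriv ψ₀) hdψ hd₀
    rw [← hK₀] at this
    calc Real.sqrt (∫ y, ‖deriv ψ y‖ ^ 2) ≤ Real.sqrt I₁ + K₀ := this
      _ ≤ K₀ + 1 := by linarith [hsI₁.trans hδ1]
  have hHψ : Real.sqrt (∫ y, (1 - ‖ψ y‖ ^ 2) ^ 2) ≤ H₀ + 1 := by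
    have := minkowskiR (fun y => 1 - ‖ψ y‖ ^ 2) (fun y => 1 - ‖ψ₀ y‖ ^ 2) hhψ hh₀
    rw [← hH₀] at this
    calc Real.sqrt (∫ y, (1 - ‖ψ y‖ ^ 2) ^ 2) ≤ Real.sqrt I₃ + H₀ := this
      _ ≤ H₀ + 1 := by linarith [hsI₃.trans hδ1]
  -- sup bounds
  have hsupψ : ∀ y : ℝ, ‖ψ y‖ ≤ B := by
    intro y
    calc ‖ψ y‖ ≤ Real.sqrt (1 + Real.sqrt (∫ z, (1 - ‖ψ z‖ ^ 2) ^ 2)) +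
          Real.sqrt (∫ z, ‖deriv ψ z‖ ^ 2) := sup_bound ψ hcont hftc hdψ hhψ y
      _ ≤ Real.sqrt (2 + H₀) + (K₀ + 1) := by
          have h1 : Real.sqrt (1 + Real.sqrt (∫ z, (1 - ‖ψ z‖ ^ 2) ^ 2)) ≤
              Real.sqrt (2 + H₀) := Real.sqrt_le_sqrt (by linarith [hHψ])
          linarith [hKψ, h1]
      _ = B := hB.symm
  have hsupψ₀ : ∀ y : ℝ, ‖ψ₀ y‖ ≤ B := by
    intro y
    calc ‖ψ₀ y‖ ≤ Real.sqrt (1 + Real.sqrt (∫ z, (1 - ‖ψ₀ z‖ ^ 2) ^ 2)) +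
          Real.sqrt (∫ z, ‖deriv ψ₀ z‖ ^ 2) := sup_bound ψ₀ hcont₀ hftc₀ hd₀ hh₀ y
      _ ≤ Real.sqrt (2 + H₀) + (K₀ + 1) := by
          have h1 : Real.sqrt (1 + Real.sqrt (∫ z, (1 - ‖ψ₀ z‖ ^ 2) ^ 2)) ≤
              Real.sqrt (2 + H₀) := Real.sqrt_le_sqrt (by rw [← hH₀]; linarith)
          rw [← hK₀]
          linarith [h1]
      _ = B := hB.symm
  -- pick a good point a
  set G : ℝ → ℝ := fun y => (1 - ‖ψ y‖ ^ 2) - (1 - ‖ψ₀ y‖ ^ 2) with hG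
  have hGcont : Continuous G := by
    apply Continuous.sub <;> exact Continuous.sub continuous_const (by continuity)
  have hGint : Integrable (fun y => G y ^ 2) volume := hgmem.integrable_sq
  obtain ⟨a, ha, hamin⟩ := pick_min G hGcont hGint x L hL0
  have hGa : |G a| < ε / 2 := by
    have h1 : L * G a ^ 2 < δ ^ 2 := lt_of_le_of_lt (by exact hamin) hI₃δ
    have h2 : G a ^ 2 < (δ / Real.sqrt L) ^ 2 := by
      rw [div_pow, Real.sq_sqrt hL0.le, lt_div_iff₀ hL0]
      linarith
    have h3 : |G a| < δ / Real.sqrt L := by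
      calc |G a| = Real.sqrt (G a ^ 2) := (Real.sqrt_sq_eq_abs _).symm
        _ < Real.sqrt ((δ / Real.sqrt L) ^ 2) := Real.sqrt_lt_sqrt (sq_nonneg _) h2
        _ = δ / Real.sqrt L := Real.sqrt_sq (div_pos hδ0 hsqL0).le
    calc |G a| < δ / Real.sqrt L := h3
      _ ≤ (Real.sqrt L * ε / 2) / Real.sqrt L := div_le_div_of_nonneg_right hδ2 hsqL0.le |>.trans_eq rfl
      _ = ε / 2 := by field_simp
  -- increments
  have hxa : x ≤ a := ha.1
  have haxL : a - x ≤ L := by linarith [ha.2]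
  have hsub : Real.sqrt (a - x) ≤ Real.sqrt L := Real.sqrt_le_sqrt haxL
  have hincψ₀ : ‖ψ₀ x - ψ₀ a‖ ≤ Real.sqrt L * K₀ := by
    rw [norm_sub_rev, hftc₀ x a]
    calc ‖∫ t in x..a, deriv ψ₀ t‖ ≤ Real.sqrt (a - x) * K₀ := incr _ hd₀ hxa
      _ ≤ Real.sqrt L * K₀ := mul_le_mul_of_nonneg_right hsub hK₀0
  have hincd : ‖(ψ x - ψ₀ x) - (ψ a - ψ₀ a)‖ ≤ Real.sqrt L * 1 := by
    have hii : ∀ u v : ℝ, IntervalIntegrable (deriv ψ) volume u v ∧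
        IntervalIntegrable (deriv ψ₀) volume u v := fun u v =>
      ⟨⟨intOn _ hdψ _ _, intOn _ hdψ _ _⟩, ⟨intOn _ hd₀ _ _, intOn _ hd₀ _ _⟩⟩
    have heq : (ψ a - ψ₀ a) - (ψ x - ψ₀ x) =
        ∫ t in x..a, (deriv ψ t - deriv ψ₀ t) := by
      rw [intervalIntegral.integral_sub (hii x a).1 (hii x a).2, ← hftc x a, ← hftc₀ x a]
      ring
    rw [norm_sub_rev, heq]
    calc ‖∫ t in x..a, (deriv ψ t - deriv ψ₀ t)‖ ≤
          Real.sqrt (a - x) * Real.sqrt I₁ := incr _ hdiff hxa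
      _ ≤ Real.sqrt L * 1 := by
          apply mul_le_mul hsub (hsI₁.trans hδ1) (Real.sqrt_nonneg _) (Real.sqrt_nonneg _)
  have hincψ : ‖ψ x - ψ a‖ ≤ Real.sqrt L * (K₀ + 1) := by
    calc ‖ψ x - ψ a‖ = ‖(ψ₀ x - ψ₀ a) + ((ψ x - ψ₀ x) - (ψ a - ψ₀ a))‖ := by ring_nf
      _ ≤ ‖ψ₀ x - ψ₀ a‖ + ‖(ψ x - ψ₀ x) - (ψ a - ψ₀ a)‖ := norm_add_le _ _
      _ ≤ Real.sqrt L * K₀ + Real.sqrt L * 1 := add_le_add hincψ₀ hincd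
      _ = Real.sqrt L * (K₀ + 1) := by ring
  -- modulus increments
  have hmod : ∀ (u : ℝ → ℂ), (∀ y, ‖u y‖ ≤ B) →
      |‖u x‖ ^ 2 - ‖u a‖ ^ 2| ≤ 2 * B * ‖u x - u a‖ := by
    intro u hu
    have h1 : |‖u x‖ ^ 2 - ‖u a‖ ^ 2| = (‖u x‖ + ‖u a‖) * |‖u x‖ - ‖u a‖| := by
      rw [show ‖u x‖ ^ 2 - ‖u a‖ ^ 2 = (‖u x‖ + ‖u a‖) * (‖u x‖ - ‖u a‖) by ring,
        abs_mul, abs_of_nonneg (by positivity)]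
    rw [h1]
    apply mul_le_mul (by linarith [hu x, hu a]) (abs_norm_sub_norm_le _ _)
      (abs_nonneg _) (by linarith)
  have hGinc : |G x - G a| ≤ C * Real.sqrt L := by
    have h1 : G x - G a = (‖ψ₀ x‖ ^ 2 - ‖ψ₀ a‖ ^ 2) - (‖ψ x‖ ^ 2 - ‖ψ a‖ ^ 2) := by
      rw [hG]; ring
    calc |G x - G a| ≤ |‖ψ₀ x‖ ^ 2 - ‖ψ₀ a‖ ^ 2| + |‖ψ x‖ ^ 2 - ‖ψ a‖ ^ 2| := by
          rw [h1]; exact abs_sub _ _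
      _ ≤ 2 * B * ‖ψ₀ x - ψ₀ a‖ + 2 * B * ‖ψ x - ψ a‖ :=
          add_le_add (hmod ψ₀ hsupψ₀) (hmod ψ hsupψ)
      _ ≤ 2 * B * (Real.sqrt L * K₀) + 2 * B * (Real.sqrt L * (K₀ + 1)) :=
          add_le_add (mul_le_mul_of_nonneg_left hincψ₀ (by linarith))
            (mul_le_mul_of_nonneg_left hincψ (by linarith))
      _ = C * Real.sqrt L := by rw [hC]; ring
  have hCL : C * Real.sqrt L < ε / 2 := by
    calc C * Real.sqrt L ≤ C * (ε / (2 * C + 2)) :=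
          mul_le_mul_of_nonneg_left hsqL hC0.le
      _ = (C * ε) / (2 * C + 2) := (mul_div_assoc _ _ _).symm
      _ < ε / 2 := aux_frac hC0 hε
  have hfinal : |G x| < ε := by
    calc |G x| = |G a + (G x - G a)| := by ring_nf
      _ ≤ |G a| + |G x - G a| := abs_add_le _ _
      _ < ε / 2 + ε / 2 := add_lt_add_of_lt_of_le hGa (hGinc.trans hCL.le)
      _ = ε := by ring
  have : |‖ψ x‖ ^ 2 - ‖ψ₀ x‖ ^ 2| = |G x| := by
    rw [hG, abs_sub_comm]; congr 1; ring
  rw [this]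
  exact hfinal


end
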